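/- arXiv:2002.07228 — 2 statements merged into one kernel-verified Lean document; each statement's English description precedes it below -/
import Mathlib

section
/- On D, the reduced Maxwell transport equations of Kerr–Newman hold: e₄(P^F) = −conj(trX) · P^F and e₃(P^F) = −tr X̲ · P^F, where P^F := Q/q̄², trX := 2/q and tr X̲ := −2Δ/(q q̄²). -/
/-! `P^F` depends on the coordinates only through `q̄ = r − i a cos θ`, which does not involve
`t` or `φ` and has `∂_r q̄ = 1`. Hence `e₄` and `e₃` act on `P^F = Q/q̄²` through their `∂_r`
coefficients `1` and `−Δ/|q|²` alone, giving `−2Q/q̄³` times that coefficient; the two transport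
equations then reduce to `conj q = q̄` and `|q|² = q q̄`. -/

noncomputable section

namespace KerrNewman

/-- A point `x = (t, r, θ, φ)` of the coordinate domain, with indices `0,1,2,3`. -/
abbrev Pt : Type := Fin 4 → ℝ

/-- Partial derivative `∂_μ` of a complex-valued function on `ℝ⁴`. -/
def pdC (μ : Fin 4) (f : Pt → ℂ) (x : Pt) : ℂ := fderiv ℝ f x (Pi.single μ 1)

/-- Partial derivative `∂_μ` of a real-valued function on `ℝ⁴`. -/
def pdR (μ : Fin 4) (f : Pt → ℝ) (x : Pt) : ℝ := fderiv ℝ f x (Pi.single μ 1)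

/-- `Δ = r² − 2Mr + a² + Q²`. -/
def Del (M a Q : ℝ) (x : Pt) : ℝ := x 1 ^ 2 - 2 * M * x 1 + a ^ 2 + Q ^ 2

/-- `|q|² = r² + a² cos²θ`. -/
def q2 (a : ℝ) (x : Pt) : ℝ := x 1 ^ 2 + a ^ 2 * Real.cos (x 2) ^ 2

/-- `q = r + i a cos θ`. -/
def qC (a : ℝ) (x : Pt) : ℂ := (x 1 : ℂ) + Complex.I * (a : ℂ) * (Real.cos (x 2) : ℂ)

/-- `q̄ = r − i a cos θ`. -/
def qbarC (a : ℝ) (x : Pt) : ℂ := (x 1 : ℂ) - Complex.I * (a : ℂ) * (Real.cos (x 2) : ℂ)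

/-- `e₄ = ((r²+a²)/Δ)∂_t + ∂_r + (a/Δ)∂_φ` as an operator on complex functions. -/
def e4 (M a Q : ℝ) (f : Pt → ℂ) (x : Pt) : ℂ :=
  (((x 1 ^ 2 + a ^ 2) / Del M a Q x : ℝ) : ℂ) * pdC 0 f x + pdC 1 f x
    + ((a / Del M a Q x : ℝ) : ℂ) * pdC 3 f x

/-- `e₃ = ((r²+a²)/|q|²)∂_t − (Δ/|q|²)∂_r + (a/|q|²)∂_φ` as an operator on
complex functions. -/
def e3 (M a Q : ℝ) (f : Pt → ℂ) (x : Pt) : ℂ :=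
  (((x 1 ^ 2 + a ^ 2) / q2 a x : ℝ) : ℂ) * pdC 0 f x
    - ((Del M a Q x / q2 a x : ℝ) : ℂ) * pdC 1 f x
    + ((a / q2 a x : ℝ) : ℂ) * pdC 3 f x

/-- `e₁ = (1/√(|q|²))∂_θ` as an operator on complex functions. -/
def e1 (a : ℝ) (f : Pt → ℂ) (x : Pt) : ℂ :=
  ((1 / Real.sqrt (q2 a x) : ℝ) : ℂ) * pdC 2 f x

/-- `e₂ = (a sinθ/√(|q|²))∂_t + (1/(√(|q|²) sinθ))∂_φ` as an operator on
complex functions. -/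
def e2 (a : ℝ) (f : Pt → ℂ) (x : Pt) : ℂ :=
  ((a * Real.sin (x 2) / Real.sqrt (q2 a x) : ℝ) : ℂ) * pdC 0 f x
    + ((1 / (Real.sqrt (q2 a x) * Real.sin (x 2)) : ℝ) : ℂ) * pdC 3 f x

/-- `e₄` as an operator on real-valued functions. -/
def e4R (M a Q : ℝ) (f : Pt → ℝ) (x : Pt) : ℝ :=
  ((x 1 ^ 2 + a ^ 2) / Del M a Q x) * pdR 0 f x + pdR 1 f x
    + (a / Del M a Q x) * pdR 3 f x

/-- `trX = 2/q`. -/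
def trX (a : ℝ) (x : Pt) : ℂ := 2 / qC a x

/-- `tr X̲ = −2Δ/(q q̄²)`. -/
def trXb (M a Q : ℝ) (x : Pt) : ℂ :=
  -2 * ((Del M a Q x : ℝ) : ℂ) / (qC a x * qbarC a x ^ 2)

/-- `H₁ = i a sinθ · q / |q|³`. -/
def H1 (a : ℝ) (x : Pt) : ℂ :=
  Complex.I * (a : ℂ) * (Real.sin (x 2) : ℂ) * qC a x
    / ((Real.sqrt (q2 a x) ^ 3 : ℝ) : ℂ)

/-- `H̲₁ = −i a sinθ · q̄ / |q|³`. -/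
def Hb1 (a : ℝ) (x : Pt) : ℂ :=
  -(Complex.I * (a : ℂ) * (Real.sin (x 2) : ℂ) * qbarC a x
    / ((Real.sqrt (q2 a x) ^ 3 : ℝ) : ℂ))

/-- `Z₁ = i a sinθ · q̄ / |q|³`. -/
def Z1 (a : ℝ) (x : Pt) : ℂ :=
  Complex.I * (a : ℂ) * (Real.sin (x 2) : ℂ) * qbarC a x
    / ((Real.sqrt (q2 a x) ^ 3 : ℝ) : ℂ)

/-- `P^F = Q/q̄²`. -/
def PF (a Q : ℝ) (x : Pt) : ℂ := (Q : ℂ) / qbarC a x ^ 2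

/-- `P = −2M/q³ + 2Q²/(q³ q̄)`. -/
def Pc (M a Q : ℝ) (x : Pt) : ℂ :=
  -2 * (M : ℂ) / qC a x ^ 3 + 2 * (Q : ℂ) ^ 2 / (qC a x ^ 3 * qbarC a x)

/-- `ω̲ = (a² cos²θ (r−M) + Mr² − a²r − Q²r)/|q|⁴`. -/
def omb (M a Q : ℝ) (x : Pt) : ℝ :=
  (a ^ 2 * Real.cos (x 2) ^ 2 * (x 1 - M) + M * x 1 ^ 2 - a ^ 2 * x 1 - Q ^ 2 * x 1)
    / q2 a x ^ 2

/-- `trχ̲ = −2rΔ/|q|⁴`. -/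
def trchib (M a Q : ℝ) (x : Pt) : ℝ := -(2 * x 1 * Del M a Q x) / q2 a x ^ 2

/-- `atrχ̲ = 2aΔ cosθ/|q|⁴`. -/
def atrchib (M a Q : ℝ) (x : Pt) : ℝ :=
  2 * a * Del M a Q x * Real.cos (x 2) / q2 a x ^ 2

/-- `atrχ = 2a cosθ/|q|²`. -/
def atrchi (a : ℝ) (x : Pt) : ℝ := 2 * a * Real.cos (x 2) / q2 a x

/-- `η₁ = −a² sinθ cosθ/|q|³`. -/
def eta1 (a : ℝ) (x : Pt) : ℝ :=
  -(a ^ 2 * Real.sin (x 2) * Real.cos (x 2)) / Real.sqrt (q2 a x) ^ 3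

/-- `η₂ = a r sinθ/|q|³`. -/
def eta2 (a : ℝ) (x : Pt) : ℝ := a * x 1 * Real.sin (x 2) / Real.sqrt (q2 a x) ^ 3

/-- `η̲₁ = −a² sinθ cosθ/|q|³`. -/
def etab1 (a : ℝ) (x : Pt) : ℝ :=
  -(a ^ 2 * Real.sin (x 2) * Real.cos (x 2)) / Real.sqrt (q2 a x) ^ 3

/-- `η̲₂ = −a r sinθ/|q|³`. -/
def etab2 (a : ℝ) (x : Pt) : ℝ := -(a * x 1 * Real.sin (x 2)) / Real.sqrt (q2 a x) ^ 3

/-- `*η₁ = a r sinθ/|q|³`. -/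
def seta1 (a : ℝ) (x : Pt) : ℝ := a * x 1 * Real.sin (x 2) / Real.sqrt (q2 a x) ^ 3

/-- `*η₂ = a² sinθ cosθ/|q|³`. -/
def seta2 (a : ℝ) (x : Pt) : ℝ :=
  a ^ 2 * Real.sin (x 2) * Real.cos (x 2) / Real.sqrt (q2 a x) ^ 3

/-- `*η̲₁ = −a r sinθ/|q|³`. -/
def setab1 (a : ℝ) (x : Pt) : ℝ := -(a * x 1 * Real.sin (x 2)) / Real.sqrt (q2 a x) ^ 3

/-- `*η̲₂ = a² sinθ cosθ/|q|³`. -/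
def setab2 (a : ℝ) (x : Pt) : ℝ :=
  a ^ 2 * Real.sin (x 2) * Real.cos (x 2) / Real.sqrt (q2 a x) ^ 3

/-- `ρ = (−2Mr³ + 2Q²r² + 6Ma²r cos²θ − 2Q²a² cos²θ)/|q|⁶`. -/
def rho (M a Q : ℝ) (x : Pt) : ℝ :=
  (-2 * M * x 1 ^ 3 + 2 * Q ^ 2 * x 1 ^ 2 + 6 * M * a ^ 2 * x 1 * Real.cos (x 2) ^ 2
      - 2 * Q ^ 2 * a ^ 2 * Real.cos (x 2) ^ 2) / q2 a x ^ 3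

/-- `tr X̲ = trχ̲ − i atrχ̲` (component form). -/
def trXbC (M a Q : ℝ) (x : Pt) : ℂ :=
  ((trchib M a Q x : ℝ) : ℂ) - Complex.I * ((atrchib M a Q x : ℝ) : ℂ)

/-- `C = c·trχ̲ + i p·atrχ̲`. -/
def Cfun (M a Q c p : ℝ) (x : Pt) : ℂ :=
  ((c * trchib M a Q x : ℝ) : ℂ) + Complex.I * ((p : ℝ) : ℂ) * ((atrchib M a Q x : ℝ) : ℂ)

open Complex ContinuousLinearMap

lemma pdC_comp_of_hasDerivAt {g : ℂ → ℂ} {g' : ℂ} {f : Pt → ℂ} {x : Pt} (μ : Fin 4)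
    (hg : HasDerivAt g g' (f x)) (hf : DifferentiableAt ℝ f x) :
    pdC μ (g ∘ f) x = g' * pdC μ f x := by
  rw [pdC, (hg.comp_hasFDerivAt x hf.hasFDerivAt).fderiv]
  rfl

lemma hasDerivAt_const_div_sq (c : ℂ) {z : ℂ} (hz : z ≠ 0) :
    HasDerivAt (fun w => c / w ^ 2) (-(2 * c) / z ^ 3) z := by
  refine ((hasDerivAt_const z c).div (hasDerivAt_pow 2 z) (pow_ne_zero 2 hz)).congr_deriv ?_
  field_simp
  ring

lemma hasFDerivAt_qbarC (a : ℝ) (x : Pt) :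
    HasFDerivAt (qbarC a)
      (ofRealCLM.comp (proj 1) + (I * a * Real.sin (x 2)) • ofRealCLM.comp (proj 2)) x := by
  have h_r : HasFDerivAt (fun y : Pt => ((y 1 : ℝ) : ℂ)) (ofRealCLM.comp (proj 1)) x :=
    ofRealCLM.hasFDerivAt.comp x (hasFDerivAt_apply 1 x)
  have h_cos_real :=
    (Real.hasDerivAt_cos (x 2)).comp_hasFDerivAt x (hasFDerivAt_apply (𝕜 := ℝ) 2 x)
  have h_cos : HasFDerivAt (fun y : Pt => ((Real.cos (y 2) : ℝ) : ℂ))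
      (ofRealCLM.comp ((-Real.sin (x 2)) • proj 2)) x :=
    ofRealCLM.hasFDerivAt.comp x h_cos_real
  refine (h_r.sub (h_cos.const_mul (I * a))).congr_fderiv ?_
  ext v
  simp [mul_assoc]

lemma pdC_qbarC (a : ℝ) (x : Pt) (μ : Fin 4) :
    pdC μ (qbarC a) x =
      (Pi.single μ 1 : Pt) 1 + I * a * Real.sin (x 2) * (Pi.single μ 1 : Pt) 2 := by
  rw [pdC, (hasFDerivAt_qbarC a x).fderiv]
  simp

lemma qbarC_ne_zero {a : ℝ} {x : Pt} (hr : x 1 ≠ 0) : qbarC a x ≠ 0 := fun h =>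
  hr (by simpa [qbarC] using congrArg re h)

lemma qC_ne_zero {a : ℝ} {x : Pt} (hr : x 1 ≠ 0) : qC a x ≠ 0 := fun h =>
  hr (by simpa [qC] using congrArg re h)

lemma conj_qC (a : ℝ) (x : Pt) : (starRingEnd ℂ) (qC a x) = qbarC a x := by
  simp [qC, qbarC, Complex.ext_iff]

lemma ofReal_q2 (a : ℝ) (x : Pt) : ((q2 a x : ℝ) : ℂ) = qC a x * qbarC a x := by
  simp only [q2, qC, qbarC]
  push_cast
  linear_combination ((a : ℂ) ^ 2 * Complex.cos (x 2) ^ 2) * I_sq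

lemma pdC_PF {a Q : ℝ} {x : Pt} (hr : x 1 ≠ 0) (μ : Fin 4) :
    pdC μ (PF a Q) x = -(2 * Q) / qbarC a x ^ 3 * pdC μ (qbarC a) x :=
  pdC_comp_of_hasDerivAt μ (hasDerivAt_const_div_sq _ (qbarC_ne_zero hr))
    (hasFDerivAt_qbarC a x).differentiableAt

lemma pdC_PF_of_ne {a Q : ℝ} {x : Pt} (hr : x 1 ≠ 0) {μ : Fin 4} (h₁ : μ ≠ 1) (h₂ : μ ≠ 2) :
    pdC μ (PF a Q) x = 0 := by
  simp [pdC_PF hr, pdC_qbarC, h₁.symm, h₂.symm]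

lemma pdC_one_PF {a Q : ℝ} {x : Pt} (hr : x 1 ≠ 0) :
    pdC 1 (PF a Q) x = -(2 * Q) / qbarC a x ^ 3 := by
  simp [pdC_PF hr, pdC_qbarC]

lemma e4_PF {M a Q : ℝ} {x : Pt} (hr : x 1 ≠ 0) :
    e4 M a Q (PF a Q) x = -(starRingEnd ℂ) (trX a x) * PF a Q x := by
  have hq := qbarC_ne_zero (a := a) hr
  rw [e4, pdC_PF_of_ne hr (by decide) (by decide), pdC_one_PF hr,
    pdC_PF_of_ne hr (by decide) (by decide), trX, PF, map_div₀, conj_qC, map_ofNat]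
  field_simp
  ring

lemma e3_PF {M a Q : ℝ} {x : Pt} (hr : x 1 ≠ 0) :
    e3 M a Q (PF a Q) x = -trXb M a Q x * PF a Q x := by
  have hq := qbarC_ne_zero (a := a) hr
  have hq' := qC_ne_zero (a := a) hr
  rw [e3, pdC_PF_of_ne hr (by decide) (by decide), pdC_one_PF hr,
    pdC_PF_of_ne hr (by decide) (by decide), trXb, PF]
  push_cast
  rw [ofReal_q2]
  field_simp
  ring

theorem maxwell_transport_PF_general (M a Q : ℝ) (x : Pt)
    (hr : 0 < x 1) :
    e4 M a Q (PF a Q) x = -(starRingEnd ℂ) (trX a x) * PF a Q x ∧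
    e3 M a Q (PF a Q) x = -trXb M a Q x * PF a Q x :=
  ⟨e4_PF hr.ne', e3_PF hr.ne'⟩

/-- on `D`, the reduced Maxwell transport equations of Kerr–Newman hold:
`e₄(P^F) = −conj(trX)·P^F` and `e₃(P^F) = −tr X̲·P^F`. -/
theorem maxwell_transport_PF (M a Q : ℝ) (x : Pt)
    (hr : 0 < x 1) (hθ₀ : 0 < x 2) (hθπ : x 2 < Real.pi)
    (hΔ : Del M a Q x ≠ 0) :
    e4 M a Q (PF a Q) x = -(starRingEnd ℂ) (trX a x) * PF a Q x ∧
    e3 M a Q (PF a Q) x = -trXb M a Q x * PF a Q x :=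
  maxwell_transport_PF_general M a Q x hr

end KerrNewman
end
end

section
/- On D, the Ricci identity ∇₃ω + ∇₄ω̲ − 4ωω̲ − (η−η̲)·ζ + η·η̲ = ρ + (ρ^F)² + (*ρ^F)² of the Einstein–Maxwell system, specialized to Kerr–Newman (where ω = 0 and ζ = −η̲), reads: e₄(ω̲) + 2(η₁η̲₁ + η₂η̲₂) − (η̲₁² + η̲₂²) = ρ + Q²/|q|⁴, where ω̲ := (a² cos²θ (r−M) + Mr² − a²r − Q²r)/|q|⁴, η₁ = η̲₁ := −a² sin θ cos θ/|q|³, η₂ := a r sin θ/|q|³, η̲₂ := −a r sin θ/|q|³, and ρ := (−2Mr³ + 2Q²r² + 6Ma²r cos²θ − 2Q²a² cos²θ)/|q|⁶. -/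
/-!
`ω̲` depends on `(r, θ)` only, so `e₄ω̲ = ∂_r ω̲`. Each `η`, `η̲` carries a factor
`1/√(|q|²)³`, so their quadratic combination is `a² sin²θ (a² cos²θ − 3r²)/|q|⁶`.
After `sin²θ = 1 − cos²θ` both sides are rational in `r` and `cos θ` with denominators
powers of `|q|² > 0`, and the identity is polynomial.
-/

noncomputable section

namespace KerrNewman

theorem pdR_eq_deriv_update {f : Pt → ℝ} {x : Pt} (hf : DifferentiableAt ℝ f x) (i : Fin 4) :
    pdR i f x = deriv (fun s => f (Function.update x i s)) (x i) := by
  have hf' : HasFDerivAt f (fderiv ℝ f x) (Function.update x i (x i)) := by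
    rw [Function.update_eq_self]; exact hf.hasFDerivAt
  exact (hf'.comp_hasDerivAt (x i) (hasDerivAt_update x i (x i))).deriv.symm

theorem pdR_eq_zero_of_update_eq {f : Pt → ℝ} {x : Pt} (hf : DifferentiableAt ℝ f x) {i : Fin 4}
    (hi : ∀ s, f (Function.update x i s) = f x) : pdR i f x = 0 := by
  simp only [pdR_eq_deriv_update hf, hi, deriv_const]

theorem q2_pos (a : ℝ) {x : Pt} (hr : 0 < x 1) : 0 < q2 a x := by
  unfold q2; positivity

theorem differentiableAt_omb (M a Q : ℝ) {x : Pt} (hx : q2 a x ≠ 0) :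
    DifferentiableAt ℝ (omb M a Q) x := by
  unfold omb
  unfold q2 at hx ⊢
  fun_prop (disch := exact pow_ne_zero 2 hx)

theorem omb_update_of_ne (M a Q : ℝ) (x : Pt) {i : Fin 4} (h1 : i ≠ 1) (h2 : i ≠ 2) (s : ℝ) :
    omb M a Q (Function.update x i s) = omb M a Q x := by
  rw [omb, omb, q2, q2, Function.update_of_ne h1.symm, Function.update_of_ne h2.symm]

theorem hasDerivAt_omb_update_r (M a Q : ℝ) {x : Pt} (hx : q2 a x ≠ 0) :
    HasDerivAt (fun s => omb M a Q (Function.update x 1 s))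
      (((a ^ 2 * Real.cos (x 2) ^ 2 + 2 * M * x 1 - a ^ 2 - Q ^ 2) * q2 a x
        - 4 * x 1 * (a ^ 2 * Real.cos (x 2) ^ 2 * (x 1 - M) + M * x 1 ^ 2 - a ^ 2 * x 1
          - Q ^ 2 * x 1)) / q2 a x ^ 3) (x 1) := by
  set c := Real.cos (x 2)
  have hfun : (fun s => omb M a Q (Function.update x 1 s)) = fun s =>
      (a ^ 2 * c ^ 2 * (s - M) + M * s ^ 2 - a ^ 2 * s - Q ^ 2 * s)
        / (s ^ 2 + a ^ 2 * c ^ 2) ^ 2 := by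
    funext s
    rw [omb, q2, Function.update_self, Function.update_of_ne (by decide : (2 : Fin 4) ≠ 1)]
  rw [hfun]
  have hN : HasDerivAt (fun s => a ^ 2 * c ^ 2 * (s - M) + M * s ^ 2 - a ^ 2 * s - Q ^ 2 * s)
      (a ^ 2 * c ^ 2 + 2 * M * x 1 - a ^ 2 - Q ^ 2) (x 1) := by
    have hs := hasDerivAt_id' (x 1)
    refine (((((hs.sub_const M).const_mul (a ^ 2 * c ^ 2)).add
      ((hasDerivAt_pow 2 (x 1)).const_mul M)).sub (hs.const_mul (a ^ 2))).sub
      (hs.const_mul (Q ^ 2))).congr_deriv ?_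
    ring
  have hD : HasDerivAt (fun s => (s ^ 2 + a ^ 2 * c ^ 2) ^ 2) (4 * x 1 * q2 a x) (x 1) := by
    refine (((hasDerivAt_pow 2 (x 1)).add_const (a ^ 2 * c ^ 2)).pow 2).congr_deriv ?_
    simp only [q2, c]; ring
  refine (hN.div hD (pow_ne_zero 2 hx)).congr_deriv ?_
  simp only [q2, c]
  field_simp

theorem e4R_omb_eq_deriv_r (M a Q : ℝ) {x : Pt} (hx : q2 a x ≠ 0) :
    e4R M a Q (omb M a Q) x = deriv (fun s => omb M a Q (Function.update x 1 s)) (x 1) := by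
  have hd := differentiableAt_omb M a Q hx
  have ht : pdR 0 (omb M a Q) x = 0 :=
    pdR_eq_zero_of_update_eq hd (omb_update_of_ne M a Q x (by decide) (by decide))
  have hφ : pdR 3 (omb M a Q) x = 0 :=
    pdR_eq_zero_of_update_eq hd (omb_update_of_ne M a Q x (by decide) (by decide))
  rw [e4R, ht, hφ, pdR_eq_deriv_update hd]
  ring

theorem div_sqrt_pow_three_mul_div_sqrt_pow_three {q : ℝ} (hq : 0 ≤ q) (A B : ℝ) :
    A / Real.sqrt q ^ 3 * (B / Real.sqrt q ^ 3) = A * B / q ^ 3 := by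
  rw [div_mul_div_comm, ← mul_pow, Real.mul_self_sqrt hq]

theorem two_mul_eta_dot_etab_sub_etab_sq (a : ℝ) {x : Pt} (hx : 0 ≤ q2 a x) :
    2 * (eta1 a x * etab1 a x + eta2 a x * etab2 a x) - (etab1 a x ^ 2 + etab2 a x ^ 2)
      = a ^ 2 * Real.sin (x 2) ^ 2 * (a ^ 2 * Real.cos (x 2) ^ 2 - 3 * x 1 ^ 2) / q2 a x ^ 3 := by
  simp only [eta1, eta2, etab1, etab2, sq, div_sqrt_pow_three_mul_div_sqrt_pow_three hx]
  ring

theorem ricci_identity_omegab_general (M a Q : ℝ) (x : Pt)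
    (hr : 0 < x 1) :
    e4R M a Q (omb M a Q) x
        + 2 * (eta1 a x * etab1 a x + eta2 a x * etab2 a x)
        - (etab1 a x ^ 2 + etab2 a x ^ 2)
      = rho M a Q x + Q ^ 2 / q2 a x ^ 2 := by
  have hq := q2_pos a hr
  rw [e4R_omb_eq_deriv_r M a Q hq.ne', (hasDerivAt_omb_update_r M a Q hq.ne').deriv, add_sub_assoc,
    two_mul_eta_dot_etab_sub_etab_sq a hq.le, rho, Real.sin_sq]
  field_simp
  unfold q2
  ring

/-- on `D`, the Ricci identity for `ω̲` of the Einstein–Maxwell system,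
specialized to Kerr–Newman (where `ω = 0`, `ζ = −η̲`):
`e₄(ω̲) + 2(η₁η̲₁ + η₂η̲₂) − (η̲₁² + η̲₂²) = ρ + Q²/|q|⁴`. -/
theorem ricci_identity_omegab (M a Q : ℝ) (x : Pt)
    (hr : 0 < x 1) (hθ₀ : 0 < x 2) (hθπ : x 2 < Real.pi)
    (hΔ : Del M a Q x ≠ 0) :
    e4R M a Q (omb M a Q) x
        + 2 * (eta1 a x * etab1 a x + eta2 a x * etab2 a x)
        - (etab1 a x ^ 2 + etab2 a x ^ 2)
      = rho M a Q x + Q ^ 2 / q2 a x ^ 2 :=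
  ricci_identity_omegab_general M a Q x hr

end KerrNewman
end
end
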